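/- Bound on ζᶜ for the time-reversal-symmetric cycle with a projective measurement channel: let U be a 2×2 unitary matrix, (e₊, e₋) an orthonormal basis of ℂ², and Φ(X) = π₁Xπ₁ + π₂Xπ₂ where π₁ = vv†, π₂ = ww† for an orthonormal basis (v, w) of ℂ². With V = U†, the transition probability ζᶜ := e₋† U† Φ(U e₊e₊† U†) U e₋ satisfies ζᶜ = 2p₁(1 − p₁) where p₁ = |v† U e₊|²; in particular 0 ≤ ζᶜ ≤ 1/2, with the value 1/2 attained exactly when p₁ = 1/2. -/

import Mathlib

/-!
Write `u = U e₊`, `u' = U e₋`; these form an orthonormal basis, as do `v, w`. Conjugating by `U`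
turns `ζᶜ` into `⟨u', Φ(uu†) u'⟩`, and since each `πⱼ X πⱼ` is a multiple of `πⱼ` this equals
`|v†u|²|v†u'|² + |w†u|²|w†u'|²`. Completeness of the two bases (`vv† + ww† = 1` and
`uu† + u'u'† = 1`) forces `|v†u'|² = |w†u|² = 1 - p₁` and `|w†u'|² = p₁`, so
`ζᶜ = 2 p₁ (1 - p₁)`, and `1/2 - 2p(1 - p) = 2 (p - 1/2)²`.
-/

open Matrix

namespace Matrix

section CommRing

variable {n R : Type*} [Fintype n] [DecidableEq n] [CommRing R] [StarRing R]

theorem sum_vecMulVec_star_eq_one (b : n → n → R)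
    (hb : ∀ i j, star (b i) ⬝ᵥ b j = if i = j then 1 else 0) :
    ∑ i, vecMulVec (b i) (star (b i)) = 1 := by
  -- the matrix with rows `star (b i)` is a right, hence left, inverse of its adjoint
  let A : Matrix n n R := of fun i => star (b i)
  have hA : A * Aᴴ = 1 := by
    ext i j
    simpa [A, mul_apply, dotProduct, one_apply] using hb i j
  calc ∑ i, vecMulVec (b i) (star (b i)) = Aᴴ * A := by
        ext j k
        simp [A, mul_apply, Matrix.sum_apply, vecMulVec_apply]
    _ = 1 := mul_eq_one_comm.mp hA

theorem vecMulVec_add_vecMulVec_eq_one {v w : Fin 2 → R} (hv : star v ⬝ᵥ v = 1)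
    (hw : star w ⬝ᵥ w = 1) (hvw : star v ⬝ᵥ w = 0) :
    vecMulVec v (star v) + vecMulVec w (star w) = 1 := by
  have hwv : star w ⬝ᵥ v = 0 := by rw [star_dotProduct, hvw, star_zero]
  simpa [Fin.sum_univ_two] using
    sum_vecMulVec_star_eq_one ![v, w] (by intro i j; fin_cases i <;> fin_cases j <;> simp [*])

end CommRing

theorem vecMulVec_mul_mul_vecMulVec {n R : Type*} [Fintype n] [CommSemiring R]
    (a b : n → R) (X : Matrix n n R) :
    vecMulVec a b * X * vecMulVec a b = (b ⬝ᵥ (X *ᵥ a)) • vecMulVec a b := by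
  rw [vecMulVec_mul, vecMulVec_mul_vecMulVec, vecMulVec_smul, dotProduct_mulVec]

end Matrix

section Complex

open Complex

variable {n : Type*} [Fintype n]

theorem star_mulVec_dotProduct_mulVec [DecidableEq n] {U : Matrix n n ℂ} (hU : Uᴴ * U = 1)
    (x y : n → ℂ) :
    star (U *ᵥ x) ⬝ᵥ (U *ᵥ y) = star x ⬝ᵥ y := by
  rw [star_mulVec, ← dotProduct_mulVec, mulVec_mulVec, hU, one_mulVec]

theorem star_dotProduct_conjTranspose_mul_mul_mulVec (U X : Matrix n n ℂ) (y : n → ℂ) :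
    star y ⬝ᵥ ((Uᴴ * X * U) *ᵥ y) = star (U *ᵥ y) ⬝ᵥ (X *ᵥ (U *ᵥ y)) := by
  rw [← mulVec_mulVec, ← mulVec_mulVec, dotProduct_mulVec, star_mulVec]

theorem normSq_star_dotProduct_comm (x y : n → ℂ) :
    normSq (star x ⬝ᵥ y) = normSq (star y ⬝ᵥ x) := by
  rw [star_dotProduct, star_def, normSq_conj]

theorem star_dotProduct_vecMulVec_mulVec (x y : n → ℂ) :
    star x ⬝ᵥ (vecMulVec y (star y) *ᵥ x) = normSq (star y ⬝ᵥ x) := by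
  rw [vecMulVec_mulVec, op_smul_eq_smul, dotProduct_smul, smul_eq_mul,
    star_dotProduct x y, star_def, mul_conj]

theorem normSq_add_normSq_eq_one {v w x : Fin 2 → ℂ} (hv : star v ⬝ᵥ v = 1)
    (hw : star w ⬝ᵥ w = 1) (hvw : star v ⬝ᵥ w = 0) (hx : star x ⬝ᵥ x = 1) :
    normSq (star v ⬝ᵥ x) + normSq (star w ⬝ᵥ x) = 1 := by
  have h := congrArg (fun P => star x ⬝ᵥ (P *ᵥ x)) (vecMulVec_add_vecMulVec_eq_one hv hw hvw)
  simp only [add_mulVec, dotProduct_add, star_dotProduct_vecMulVec_mulVec, one_mulVec, hx] at h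
  exact_mod_cast h

theorem star_dotProduct_pinching_vecMulVec_mulVec (v w x y : n → ℂ) :
    star y ⬝ᵥ ((vecMulVec v (star v) * vecMulVec x (star x) * vecMulVec v (star v) +
        vecMulVec w (star w) * vecMulVec x (star x) * vecMulVec w (star w)) *ᵥ y) =
      ((normSq (star v ⬝ᵥ x) * normSq (star v ⬝ᵥ y) +
        normSq (star w ⬝ᵥ x) * normSq (star w ⬝ᵥ y) : ℝ) : ℂ) := by
  simp only [vecMulVec_mul_mul_vecMulVec, add_mulVec, smul_mulVec, dotProduct_add,
    dotProduct_smul, star_dotProduct_vecMulVec_mulVec, smul_eq_mul,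
    normSq_star_dotProduct_comm x]
  push_cast
  ring

end Complex

theorem two_mul_mul_one_sub_le_half (p : ℝ) : 2 * p * (1 - p) ≤ 1 / 2 := by
  nlinarith [sq_nonneg (2 * p - 1)]

theorem two_mul_mul_one_sub_eq_half_iff (p : ℝ) : 2 * p * (1 - p) = 1 / 2 ↔ p = 1 / 2 := by
  constructor
  · intro h
    nlinarith [sq_nonneg (2 * p - 1)]
  · rintro rfl
    norm_num

theorem zeta_c_bound_projective_time_reversal_general
    (ep em v w : Fin 2 → ℂ)
    (hep : star ep ⬝ᵥ ep = 1) (hem : star em ⬝ᵥ em = 1) (hepm : star ep ⬝ᵥ em = 0)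
    (hv : star v ⬝ᵥ v = 1) (hw : star w ⬝ᵥ w = 1) (hvw : star v ⬝ᵥ w = 0)
    (U : Matrix (Fin 2) (Fin 2) ℂ)
    (hU : Uᴴ * U = 1)
    (Φ : Matrix (Fin 2) (Fin 2) ℂ → Matrix (Fin 2) (Fin 2) ℂ)
    (hΦ : ∀ X, Φ X = vecMulVec v (star v) * X * vecMulVec v (star v) +
        vecMulVec w (star w) * X * vecMulVec w (star w))
    (ζc : ℂ)
    (hζc : ζc = star em ⬝ᵥ ((Uᴴ * Φ (U * vecMulVec ep (star ep) * Uᴴ) * U) *ᵥ em))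
    (p₁ : ℝ) (hp₁ : p₁ = ‖star v ⬝ᵥ (U *ᵥ ep)‖ ^ 2) :
    ζc = ((2 * p₁ * (1 - p₁) : ℝ) : ℂ) ∧
      0 ≤ 2 * p₁ * (1 - p₁) ∧ 2 * p₁ * (1 - p₁) ≤ 1 / 2 ∧
      (2 * p₁ * (1 - p₁) = 1 / 2 ↔ p₁ = 1 / 2) := by
  set u := U *ᵥ ep
  set u' := U *ᵥ em
  have hconj : U * vecMulVec ep (star ep) * Uᴴ = vecMulVec u (star u) := by
    rw [mul_vecMulVec, vecMulVec_mul, star_mulVec]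
  have hζ : ζc = ((Complex.normSq (star v ⬝ᵥ u) * Complex.normSq (star v ⬝ᵥ u') +
      Complex.normSq (star w ⬝ᵥ u) * Complex.normSq (star w ⬝ᵥ u') : ℝ) : ℂ) := by
    rw [hζc, hconj, star_dotProduct_conjTranspose_mul_mul_mulVec, hΦ,
      star_dotProduct_pinching_vecMulVec_mulVec]
  have hu : star u ⬝ᵥ u = 1 := by rw [star_mulVec_dotProduct_mulVec hU, hep]
  have hu' : star u' ⬝ᵥ u' = 1 := by rw [star_mulVec_dotProduct_mulVec hU, hem]
  have huu' : star u ⬝ᵥ u' = 0 := by rw [star_mulVec_dotProduct_mulVec hU, hepm]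
  have hvw_u := normSq_add_normSq_eq_one hv hw hvw hu
  have hvw_u' := normSq_add_normSq_eq_one hv hw hvw hu'
  have huu'_v := normSq_add_normSq_eq_one hu hu' huu' hv
  rw [normSq_star_dotProduct_comm u, normSq_star_dotProduct_comm u'] at huu'_v
  have hp : p₁ = Complex.normSq (star v ⬝ᵥ u) := by rw [hp₁, Complex.sq_norm]
  have hp_le : p₁ ≤ 1 := by linarith [Complex.normSq_nonneg (star w ⬝ᵥ u)]
  refine ⟨?_, by nlinarith [Complex.normSq_nonneg (star v ⬝ᵥ u)],
    two_mul_mul_one_sub_le_half p₁, two_mul_mul_one_sub_eq_half_iff p₁⟩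
  have hc : Complex.normSq (star w ⬝ᵥ u) = 1 - p₁ := by linarith
  have hb : Complex.normSq (star v ⬝ᵥ u') = 1 - p₁ := by linarith
  have hd : Complex.normSq (star w ⬝ᵥ u') = p₁ := by linarith
  rw [hζ, hb, hc, hd, ← hp]
  ring_nf

/-- Bound on `ζᶜ` for the time-reversal-symmetric cycle with a projective
measurement channel: let `U` be a `2 × 2` unitary, `(e₊, e₋)` an orthonormal basis of `ℂ²`,
and `Φ(X) = π₁ X π₁ + π₂ X π₂` where `π₁ = vvᴴ`, `π₂ = wwᴴ` for an orthonormal basis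
`(v, w)` of `ℂ²`.  With `V = Uᴴ`, the transition probability
`ζᶜ := e₋ᴴ Uᴴ Φ(U e₊e₊ᴴ Uᴴ) U e₋` satisfies `ζᶜ = 2 p₁ (1 − p₁)` where
`p₁ = |vᴴ U e₊|²`; in particular `0 ≤ ζᶜ ≤ 1/2`, with the value `1/2` attained exactly when
`p₁ = 1/2`. -/
theorem zeta_c_bound_projective_time_reversal
    (ep em v w : Fin 2 → ℂ)
    (hep : star ep ⬝ᵥ ep = 1) (hem : star em ⬝ᵥ em = 1) (hepm : star ep ⬝ᵥ em = 0)
    (hv : star v ⬝ᵥ v = 1) (hw : star w ⬝ᵥ w = 1) (hvw : star v ⬝ᵥ w = 0)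
    (U : Matrix (Fin 2) (Fin 2) ℂ)
    (hU : Uᴴ * U = 1) (hU' : U * Uᴴ = 1)
    (Φ : Matrix (Fin 2) (Fin 2) ℂ → Matrix (Fin 2) (Fin 2) ℂ)
    (hΦ : ∀ X, Φ X = vecMulVec v (star v) * X * vecMulVec v (star v) +
        vecMulVec w (star w) * X * vecMulVec w (star w))
    (ζc : ℂ)
    (hζc : ζc = star em ⬝ᵥ ((Uᴴ * Φ (U * vecMulVec ep (star ep) * Uᴴ) * U) *ᵥ em))
    (p₁ : ℝ) (hp₁ : p₁ = ‖star v ⬝ᵥ (U *ᵥ ep)‖ ^ 2) :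
    ζc = ((2 * p₁ * (1 - p₁) : ℝ) : ℂ) ∧
      0 ≤ 2 * p₁ * (1 - p₁) ∧ 2 * p₁ * (1 - p₁) ≤ 1 / 2 ∧
      (2 * p₁ * (1 - p₁) = 1 / 2 ↔ p₁ = 1 / 2) :=
  zeta_c_bound_projective_time_reversal_general ep em v w hep hem hepm hv hw hvw U hU Φ hΦ ζc hζc p₁
    hp₁
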